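/- For s odd, s ≥ 3, and p = 2, with r = (s+1)/2 and r' = (s+3)/2: h_{2,r'}(0,1,3,5,...,s-2,s-1) - h_{2,r}(0,2,4,...,s-3,s-1) = 1/(2-1) = 1. Equivalently, the difference of the h-values of the tuples with difference vectors (1,2,...,2,1) and (2,2,...,2) equals exactly 1 when p = 2. -/
import Mathlib

/-- `h_{p,r}(a) = Σ_{k=1}^{r-1} Σ_{i=k+1}^{r} 1/p^(a_i - a_k)` (1-based indexing). -/
noncomputable def hpr (p : ℝ) (r : ℕ) (a : ℕ → ℤ) : ℝ :=
  ∑ k ∈ Finset.Icc 1 (r - 1), ∑ i ∈ Finset.Icc (k + 1) r, p ^ (a k - a i)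

lemma hpr_succ (p : ℝ) (r : ℕ) (a : ℕ → ℤ) :
    hpr p (r + 1) a = hpr p r a + ∑ k ∈ Finset.Icc 1 r, p ^ (a k - a (r + 1)) := by
  unfold hpr
  rw [Nat.add_sub_cancel]
  have h1 : ∀ k ∈ Finset.Icc 1 r,
      (∑ i ∈ Finset.Icc (k + 1) (r + 1), p ^ (a k - a i))
        = (∑ i ∈ Finset.Icc (k + 1) r, p ^ (a k - a i)) + p ^ (a k - a (r + 1)) := by
    intro k hk
    simp only [Finset.mem_Icc] at hk
    exact Finset.sum_Icc_succ_top (by omega) _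
  rw [Finset.sum_congr rfl h1, Finset.sum_add_distrib]
  congr 1
  rcases r with _ | n
  · simp
  · rw [Finset.sum_Icc_succ_top (by omega : 1 ≤ n + 1)]
    rw [Finset.Icc_eq_empty (by omega : ¬ (n+1+1 ≤ n+1))]
    simp

lemma hpr_congr (p : ℝ) (r : ℕ) (a b : ℕ → ℤ) (h : ∀ i ∈ Finset.Icc 1 r, a i = b i) :
    hpr p r a = hpr p r b := by
  unfold hpr
  refine Finset.sum_congr rfl fun k hk => Finset.sum_congr rfl fun i hi => ?_
  simp only [Finset.mem_Icc] at hk hi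
  rw [h k (by simp only [Finset.mem_Icc]; omega), h i (by simp only [Finset.mem_Icc]; omega)]

lemma geo (c : ℤ) (n : ℕ) :
    ∑ k ∈ Finset.Icc 1 n, (2:ℝ) ^ (2 * (k:ℤ) + c) = 2 ^ c * ((4:ℝ) ^ (n+1) - 4) / 3 := by
  induction n with
  | zero => simp
  | succ n ih =>
    rw [Finset.sum_Icc_succ_top (by omega : 1 ≤ n + 1), ih]
    have : (2:ℝ) ^ (2 * ((n:ℤ)+1) + c) = (2:ℝ)^c * 4 ^ (n+1) := by
      rw [zpow_add₀ (by norm_num : (2:ℝ) ≠ 0)]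
      rw [mul_comm]
      congr 1
      rw [show (2 * ((n:ℤ)+1)) = ((2*(n+1) : ℕ) : ℤ) by push_cast; ring, zpow_natCast]
      rw [pow_mul]
      norm_num
    push_cast
    rw [this]
    ring

lemma two_zpow_neg_two_mul (m : ℕ) : (2:ℝ) ^ (-(2 * (m:ℤ))) = ((4:ℝ) ^ m)⁻¹ := by
  rw [zpow_neg, show (2 * (m:ℤ)) = ((2*m : ℕ) : ℤ) by push_cast; ring, zpow_natCast, pow_mul]
  norm_num

lemma hins (n : ℕ) : Finset.Icc 1 (n+1) = insert 1 (Finset.Icc 2 (n+1)) := by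
  ext x; simp only [Finset.mem_Icc, Finset.mem_insert]; omega

lemma geo2 (c : ℤ) (n : ℕ) :
    ∑ k ∈ Finset.Icc 2 (n+1), (2:ℝ) ^ (2*(k:ℤ)+c) = 2^c * ((4:ℝ)^(n+2) - 16)/3 := by
  have h := geo c (n+1)
  rw [hins, Finset.sum_insert (by simp)] at h
  have h2 : (2:ℝ)^(2*((1:ℕ):ℤ)+c) = 4 * 2^c := by
    rw [zpow_add₀ (by norm_num : (2:ℝ)≠0)]; norm_num
  rw [h2] at h
  have : (4:ℝ)^(n+1+1) = 4^(n+2) := by norm_num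
  rw [this] at h
  linarith

def g : ℕ → ℤ := fun i => if i = 1 then 0 else 2*(i:ℤ) - 3

lemma lemB (m : ℕ) : hpr 2 (m+1) (fun i => 2*((i:ℤ)-1)) = (3*m - 1)/9 + 1/(9 * 4^m) := by
  induction m with
  | zero => unfold hpr; norm_num
  | succ n ih =>
    rw [show n+1+1 = (n+1)+1 from rfl, hpr_succ, ih]
    have h1 : ∀ k ∈ Finset.Icc 1 (n+1),
        (2:ℝ)^((fun i : ℕ => 2*((i:ℤ)-1)) k - (fun i : ℕ => 2*((i:ℤ)-1)) (n+1+1))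
          = (2:ℝ)^(2*(k:ℤ) + (-(2*((n+2:ℕ):ℤ)))) := by
      intro k hk; congr 1; push_cast; ring
    rw [Finset.sum_congr rfl h1, geo, two_zpow_neg_two_mul]
    have h4 : (4:ℝ)^n ≠ 0 := by positivity
    have h42 : (4:ℝ)^(n+2) = 16 * 4^n := by ring
    have h41 : (4:ℝ)^(n+1) = 4 * 4^n := by ring
    rw [h42, h41]
    push_cast
    field_simp
    ring

lemma lemC (m : ℕ) : hpr 2 (m+1) g = (3*m+2)/9 - 2/(9*4^m) := by
  induction m with
  | zero => unfold hpr; norm_num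
  | succ n ih =>
    rw [show n+1+1 = (n+1)+1 from rfl, hpr_succ, ih]
    rw [hins, Finset.sum_insert (by simp)]
    have hg1 : (2:ℝ)^(g 1 - g (n+1+1)) = ((4:ℝ)^n)⁻¹ * (1/2) := by
      have : g 1 - g (n+1+1) = -(2*(n:ℤ)) + (-1) := by
        simp only [g, if_pos rfl, if_neg (by omega : n+1+1 ≠ 1)]
        push_cast; ring
      rw [this, zpow_add₀ (by norm_num : (2:ℝ)≠0), two_zpow_neg_two_mul]
      norm_num
    rw [hg1]
    have h1 : ∀ k ∈ Finset.Icc 2 (n+1),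
        (2:ℝ)^(g k - g (n+1+1)) = (2:ℝ)^(2*(k:ℤ) + (-(2*((n+2:ℕ):ℤ)))) := by
      intro k hk
      simp only [Finset.mem_Icc] at hk
      congr 1
      simp only [g, if_neg (by omega : k ≠ 1), if_neg (by omega : n+1+1 ≠ 1)]
      push_cast; ring
    rw [Finset.sum_congr rfl h1, geo2, two_zpow_neg_two_mul]
    have h4 : (4:ℝ)^n ≠ 0 := by positivity
    have h42 : (4:ℝ)^(n+2) = 16 * 4^n := by ring
    have h41 : (4:ℝ)^(n+1) = 4 * 4^n := by ring
    rw [h42, h41]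
    push_cast
    field_simp
    ring

lemma lemD (m : ℕ) : ∑ k ∈ Finset.Icc 1 (m+1), (2:ℝ)^(g k - 2*(m:ℤ)) = 2/3 + 1/(3*4^m) := by
  rw [hins, Finset.sum_insert (by simp)]
  have hg1 : (2:ℝ)^(g 1 - 2*(m:ℤ)) = ((4:ℝ)^m)⁻¹ := by
    have : g 1 - 2*(m:ℤ) = -(2*(m:ℤ)) := by simp [g]
    rw [this, two_zpow_neg_two_mul]
  rw [hg1]
  have h1 : ∀ k ∈ Finset.Icc 2 (m+1),
      (2:ℝ)^(g k - 2*(m:ℤ)) = (2:ℝ)^(2*(k:ℤ) + (-(2*((m:ℕ):ℤ)) + (-3))) := by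
    intro k hk
    simp only [Finset.mem_Icc] at hk
    congr 1
    simp only [g, if_neg (by omega : k ≠ 1)]
    ring
  rw [Finset.sum_congr rfl h1, geo2, zpow_add₀ (by norm_num : (2:ℝ)≠0), two_zpow_neg_two_mul]
  have h4 : (4:ℝ)^m ≠ 0 := by positivity
  have h42 : (4:ℝ)^(m+2) = 16 * 4^m := by ring
  rw [h42]
  have h8 : (2:ℝ)^(-3:ℤ) = 1/8 := by norm_num
  rw [h8]
  field_simp
  ring

theorem stmt_19 (s : ℕ) (hs : Odd s) (hs3 : 3 ≤ s) :
    hpr 2 ((s + 3) / 2)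
        (fun i => if i = 1 then 0 else if i = (s + 3) / 2 then (s : ℤ) - 1
          else 2 * (i : ℤ) - 3) -
      hpr 2 ((s + 1) / 2) (fun i => 2 * ((i : ℤ) - 1)) = 1 := by
  obtain ⟨m, hm⟩ := hs
  subst hm
  have h1 : (2*m+1 + 3) / 2 = m+2 := by omega
  have h2 : (2*m+1 + 1) / 2 = m+1 := by omega
  rw [h1, h2, lemB]
  rw [show m+2 = (m+1)+1 from rfl, hpr_succ]
  rw [hpr_congr 2 (m+1) _ g (by
    intro i hi
    simp only [Finset.mem_Icc] at hi
    have hne : i ≠ m+2 := by omega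
    simp [g, hne])]
  rw [lemC]
  have hD : ∑ k ∈ Finset.Icc 1 (m+1),
      (2:ℝ)^((fun i => if i = 1 then (0:ℤ) else if i = m+2 then ((2*m+1 : ℕ) : ℤ) - 1
          else 2 * (i : ℤ) - 3) k
        - (fun i => if i = 1 then (0:ℤ) else if i = m+2 then ((2*m+1 : ℕ) : ℤ) - 1
          else 2 * (i : ℤ) - 3) (m+1+1))
      = 2/3 + 1/(3*4^m) := by
    rw [← lemD m]
    refine Finset.sum_congr rfl fun k hk => ?_
    simp only [Finset.mem_Icc] at hk
    congr 1
    have hne : k ≠ m+2 := by omega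
    have hm2 : m+1+1 = m+2 := rfl
    simp only [hm2, if_neg (by omega : m+2 ≠ 1), if_pos rfl, g, hne, if_neg hne]
    by_cases hk1 : k = 1 <;> simp [hk1]
  rw [hD]
  have h4 : (4:ℝ)^m ≠ 0 := by positivity
  field_simp
  ring
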